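/- Let E = (Fin 3 → ℝ) × (Fin 3 → ℝ) with points written (u, v) and tangent vectors written (a, b). Define the field of symmetric bilinear forms g₁ : E → (E → E → ℝ) by g₁(u,v)((a,b),(a',b')) = Σ_{i=1}^{3} (a_i b'_i + a'_i b_i) + 2 v₂ a₁ a'₁ + 2 v₃ a₂ a'₂ (the metric 2du₁(dv₁ + v₂du₁) + 2du₂(dv₂ + v₃du₂) + 2du₃dv₃). For λ = (1, 1, 0) and τ ∈ ℝ let B_τ : E → E be the linear boost B_τ(u, v) = ((e^{−λ_i τ} u_i)_i, (e^{λ_i τ} v_i)_i), and define the pullback (Φ_τ g₁)(p)(w, w') = g₁(B_τ p)(B_τ w, B_τ w'). Then for all p, w, w' ∈ E, (Φ_τ g₁)(p)(w, w') converges as τ → +∞ to η(p)(w, w'), where η is the constant (flat) bilinear form η((a,b),(a',b')) = Σ_{i=1}^{3} (a_i b'_i + a'_i b_i) (the flat metric 2du₁dv₁ + 2du₂dv₂ + 2du₃dv₃). -/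

import Mathlib

open Real Filter Topology

/-- The metric `g₁ = 2du₁(dv₁ + v₂du₁) + 2du₂(dv₂ + v₃du₂) + 2du₃dv₃` as a field of
bilinear forms on `E = (Fin 3 → ℝ) × (Fin 3 → ℝ)`; points are `(u, v)` and tangent
vectors `(a, b)`. -/
noncomputable def gOne : ((Fin 3 → ℝ) × (Fin 3 → ℝ)) → ((Fin 3 → ℝ) × (Fin 3 → ℝ)) →
    ((Fin 3 → ℝ) × (Fin 3 → ℝ)) → ℝ :=
  fun p w w' =>
    (∑ i : Fin 3, (w.1 i * w'.2 i + w'.1 i * w.2 i))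
      + 2 * p.2 1 * w.1 0 * w'.1 0
      + 2 * p.2 2 * w.1 1 * w'.1 1

/-- The flat metric `η = 2du₁dv₁ + 2du₂dv₂ + 2du₃dv₃` as a constant bilinear form. -/
noncomputable def flatEta : ((Fin 3 → ℝ) × (Fin 3 → ℝ)) →
    ((Fin 3 → ℝ) × (Fin 3 → ℝ)) → ℝ :=
  fun w w' => ∑ i : Fin 3, (w.1 i * w'.2 i + w'.1 i * w.2 i)

/-- The linear boost `B_τ(u, v) = ((e^{−λ_i τ} u_i)_i, (e^{λ_i τ} v_i)_i)` with
boost vector `λ = (1, 1, 0)`. -/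
noncomputable def boost110 (τ : ℝ) :
    ((Fin 3 → ℝ) × (Fin 3 → ℝ)) → ((Fin 3 → ℝ) × (Fin 3 → ℝ)) :=
  fun p =>
    (fun i => Real.exp (-(![(1 : ℝ), 1, 0] i) * τ) * p.1 i,
     fun i => Real.exp ((![(1 : ℝ), 1, 0] i) * τ) * p.2 i)

/-!
The boost rescales `du_i` by `e^{-λ_i τ}` and `dv_i` by `e^{λ_i τ}`, so it preserves each
product `du_i dv_i` and hence `η`. The two non-flat terms `2 v₂ du₁²` and `2 v₃ du₂²` of `g₁`
pick up the weights `e^{(λ₂ - 2λ₁) τ} = e^{-τ}` and `e^{(λ₃ - 2λ₂) τ} = e^{-2τ}`, so they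
die out as `τ → ∞`.
-/

section

variable (τ : ℝ) (p w w' : (Fin 3 → ℝ) × (Fin 3 → ℝ))

theorem gOne_eq_flatEta_add :
    gOne p w w' = flatEta w w' + 2 * p.2 1 * w.1 0 * w'.1 0 + 2 * p.2 2 * w.1 1 * w'.1 1 :=
  rfl

theorem flatEta_boost110 : flatEta (boost110 τ w) (boost110 τ w') = flatEta w w' := by
  have cancel : ∀ c x y : ℝ, exp (-c * τ) * x * (exp (c * τ) * y) = x * y := fun c x y => by
    rw [mul_mul_mul_comm, ← exp_add, neg_mul, neg_add_cancel, exp_zero, one_mul]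
  simp only [flatEta, boost110, cancel]

theorem gOne_boost110 :
    gOne (boost110 τ p) (boost110 τ w) (boost110 τ w') =
      flatEta w w' + 2 * p.2 1 * w.1 0 * w'.1 0 * exp (-τ)
        + 2 * p.2 2 * w.1 1 * w'.1 1 * exp (-(2 * τ)) := by
  have inverse : exp τ * exp (-τ) = 1 := by rw [← exp_add, add_neg_cancel, exp_zero]
  have square : exp (-(2 * τ)) = exp (-τ) * exp (-τ) := by rw [← exp_add]; ring_nf
  rw [gOne_eq_flatEta_add, flatEta_boost110, square]
  simp only [boost110, Matrix.cons_val, one_mul, neg_mul, zero_mul, exp_zero]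
  linear_combination (2 * p.2 1 * w.1 0 * w'.1 0 * exp (-τ)) * inverse

end

/-- The boost limit with boost vector `(1,1,0)`: the pullback of the metric
`2du₁(dv₁ + v₂du₁) + 2du₂(dv₂ + v₃du₂) + 2du₃dv₃` converges pointwise, as `τ → +∞`,
to the flat metric `2du₁dv₁ + 2du₂dv₂ + 2du₃dv₃`. -/
theorem boost_limit_VSI_step2 :
    ∀ p w w' : (Fin 3 → ℝ) × (Fin 3 → ℝ),
      Tendsto
        (fun τ : ℝ => gOne (boost110 τ p) (boost110 τ w) (boost110 τ w'))
        atTop (𝓝 (flatEta w w')) := by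
  intro p w w'
  simp only [gOne_boost110]
  have decay : ∀ c : ℝ, 0 < c → Tendsto (fun τ : ℝ => exp (-(c * τ))) atTop (𝓝 0) := fun c hc =>
    tendsto_exp_neg_atTop_nhds_zero.comp (tendsto_id.const_mul_atTop hc)
  simpa using ((tendsto_const_nhds (x := flatEta w w')).add
    ((decay 1 one_pos).const_mul (2 * p.2 1 * w.1 0 * w'.1 0))).add
    ((decay 2 two_pos).const_mul (2 * p.2 2 * w.1 1 * w'.1 1))
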